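/- Fix an m × m real matrix Â, subsets R, C of rows and columns (the 'block'), and integers k', p, q. Let D_r and D_c be the diagonal 0/1 matrices indicating R and C. Then the coefficient of λ^{m−k'} t_r^p t_c^q in the three-variable polynomial P(λ, t_r, t_c) = det(Âᵀ((I−D_r) + t_r D_r) Â ((I−D_c) + t_c D_c) + λI) equals the sum of det(Â_{U',V'})² over all pairs (U', V') with |U'| = |V'| = k', |U' ∩ R| = p, and |V' ∩ C| = q. -/
import Mathlib


open Matrix MvPolynomial

section Aux

open Matrix Finset

variable {n : ℕ} {R : Type} [CommRing R]

variable {n : ℕ} {R : Type} [CommRing R]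

lemma det_piecewise_one (X : Matrix (Fin n) (Fin n) R) (S : Finset (Fin n)) :
    (Matrix.of fun i => if i ∈ S then X i else (1 : Matrix (Fin n) (Fin n) R) i).det
      = (X.submatrix (S.orderEmbOfFin rfl) (S.orderEmbOfFin rfl)).det := by
  classical
  set M := Matrix.of fun i => if i ∈ S then X i else (1 : Matrix (Fin n) (Fin n) R) i with hM
  rw [← Matrix.det_submatrix_equiv_self (Equiv.sumCompl (· ∈ S)) M]
  have h2 : M.submatrix (Equiv.sumCompl (· ∈ S)) (Equiv.sumCompl (· ∈ S)) =
      Matrix.fromBlocks (X.submatrix (fun a : {x // x ∈ S} => (a : Fin n)) (fun a : {x // x ∈ S} => (a : Fin n)))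
        (X.submatrix (fun a : {x // x ∈ S} => (a : Fin n)) (fun a : {x // ¬ x ∈ S} => (a : Fin n)))
        0 1 := by
    ext i j
    cases i with
    | inl i =>
      cases j with
      | inl j => simp [M, i.2]
      | inr j => simp [M, i.2]
    | inr i =>
      cases j with
      | inl j =>
        have hne : (i : Fin n) ≠ (j : Fin n) := fun h => i.2 (h ▸ j.2)
        simp [M, i.2, Matrix.one_apply, hne]
      | inr j =>
        simp [M, i.2, Matrix.one_apply, Subtype.ext_iff]
  rw [h2, Matrix.det_fromBlocks_zero₂₁, Matrix.det_one, mul_one]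
  rw [← Matrix.det_submatrix_equiv_self (S.orderIsoOfFin rfl).toEquiv]
  congr 1

lemma det_add_smul_one (X : Matrix (Fin n) (Fin n) R) (l : R) :
    (X + l • (1 : Matrix (Fin n) (Fin n) R)).det
      = ∑ S : Finset (Fin n), l ^ (n - S.card) *
          (X.submatrix (S.orderEmbOfFin rfl) (S.orderEmbOfFin rfl)).det := by
  classical
  set f := (Matrix.detRowAlternating : (Fin n → R) [⋀^Fin n]→ₗ[R] R).toMultilinearMap with hf
  have h0 : (X + l • (1 : Matrix (Fin n) (Fin n) R)).det
      = f ((fun i => X i) + (fun i => l • (1 : Matrix (Fin n) (Fin n) R) i)) := rfl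
  rw [h0, f.map_add_univ]
  refine Finset.sum_congr rfl fun S _ => ?_
  have hpc0 := (Finset.piecewise_compl S (fun i => l • (1 : Matrix (Fin n) (Fin n) R) i)
      (fun i => X i)).symm
  rw [hpc0]
  set m0 : Fin n → Fin n → R :=
    Sᶜ.piecewise (fun i => (1 : Matrix (Fin n) (Fin n) R) i) (fun i => X i) with hm0
  have hpc : Sᶜ.piecewise (fun i => l • (1 : Matrix (Fin n) (Fin n) R) i) (fun i => X i)
      = Sᶜ.piecewise (fun i => l • m0 i) m0 := by
    apply Finset.piecewise_congr
    · intro i hi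
      rw [hm0, Finset.piecewise_eq_of_mem _ _ _ hi]
    · intro i hi
      rw [hm0, Finset.piecewise_eq_of_notMem _ _ _ hi]
  rw [hpc, f.map_piecewise_smul (fun _ => l) m0 Sᶜ]
  have hcard : (Sᶜ).card = n - S.card := by
    rw [Finset.card_compl, Fintype.card_fin]
  rw [Finset.prod_const, hcard, smul_eq_mul]
  congr 1
  have h1 : f m0 = (Matrix.of m0).det := rfl
  have h2 : (Matrix.of m0) = (Matrix.of fun i => if i ∈ S then X i
      else (1 : Matrix (Fin n) (Fin n) R) i) := by
    funext i
    show Sᶜ.piecewise (fun i => (1 : Matrix (Fin n) (Fin n) R) i) (fun i => X i) i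
      = if i ∈ S then X i else (1 : Matrix (Fin n) (Fin n) R) i
    by_cases h : i ∈ S <;> simp [Finset.piecewise, h]
  rw [h1, h2, det_piecewise_one]

/-- The permutation of `Fin s` induced by an injective map into `V`. -/
noncomputable def permOf {s m : ℕ} (V : Finset (Fin m)) (hV : V.card = s)
    (p : Fin s → Fin m) (hinj : Function.Injective p) (him : ∀ x, p x ∈ V) :
    Equiv.Perm (Fin s) :=
  Equiv.ofBijective (fun x => (V.orderIsoOfFin hV).symm ⟨p x, him x⟩)
    (Finite.injective_iff_bijective.mp (fun a b hab => hinj (by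
      have h2 := congrArg (fun y => ((V.orderIsoOfFin hV) y : Fin m)) hab
      simpa using h2)))

lemma permOf_spec {s m : ℕ} (V : Finset (Fin m)) (hV : V.card = s)
    (p : Fin s → Fin m) (hinj : Function.Injective p) (him : ∀ x, p x ∈ V) (x : Fin s) :
    V.orderEmbOfFin hV (permOf V hV p hinj him x) = p x := by
  have : V.orderEmbOfFin hV (permOf V hV p hinj him x)
      = ((V.orderIsoOfFin hV) ((V.orderIsoOfFin hV).symm ⟨p x, him x⟩) : Fin m) := by
    rw [Finset.coe_orderIsoOfFin_apply]; rfl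
  rw [this, OrderIso.apply_symm_apply]

lemma image_orderEmbOfFin_comp {s m : ℕ} (V : Finset (Fin m)) (hV : V.card = s)
    (σ : Equiv.Perm (Fin s)) :
    Finset.image (fun x => V.orderEmbOfFin hV (σ x)) Finset.univ = V := by
  apply Finset.eq_of_subset_of_card_le
  · intro y hy
    obtain ⟨x, _, rfl⟩ := Finset.mem_image.mp hy
    exact Finset.orderEmbOfFin_mem V hV (σ x)
  · have hinj : Function.Injective (fun x => V.orderEmbOfFin hV (σ x)) :=
      fun a b hab => σ.injective ((V.orderEmbOfFin hV).injective hab)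
    rw [Finset.card_image_of_injective _ hinj, card_univ, Fintype.card_fin, hV]

lemma det_BDBt {s m : ℕ} (B : Matrix (Fin s) (Fin m) R) (w : Fin m → R) :
    (Matrix.of fun i j => ∑ k, w k * (B i k * B j k)).det
      = ∑ V ∈ Finset.univ.powersetCard s,
          (∏ k ∈ V, w k) *
            (if h : V.card = s then (B.submatrix id (V.orderEmbOfFin h)).det ^ 2 else 0) := by
  classical
  set f := (Matrix.detRowAlternating : (Fin s → R) [⋀^Fin s]→ₗ[R] R).toMultilinearMap with hf
  set r : Fin m → (Fin s → R) := fun k j => B j k with hr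
  set c : Fin s → Fin m → R := fun i k => w k * B i k with hc
  set T : (Fin s → Fin m) → R :=
    fun p => (∏ i, c i (p i)) * (Matrix.of fun i j => B j (p i)).det with hT
  have step1 : (Matrix.of fun i j => ∑ k, w k * (B i k * B j k)).det
      = f (fun i => ∑ k, c i k • r k) := by
    congr 1
    funext i j
    simp [hc, hr, Finset.sum_apply, smul_eq_mul, mul_assoc]
  have step2 : f (fun i => ∑ k, c i k • r k) = ∑ p : Fin s → Fin m, T p := by
    rw [f.map_sum (g := fun i k => c i k • r k)]
    refine Finset.sum_congr rfl fun p _ => ?_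
    rw [f.map_smul_univ (fun i => c i (p i)) (fun i => r (p i))]
    rfl
  have step3 : ∑ p : Fin s → Fin m, T p
      = ∑ p ∈ Finset.univ.filter (fun p : Fin s → Fin m => Function.Injective p), T p := by
    symm
    apply Finset.sum_filter_of_ne
    intro p _ hTp
    by_contra hni
    apply hTp
    rw [Function.not_injective_iff] at hni
    obtain ⟨i, j, hij, hne⟩ := hni
    have : (Matrix.of fun i j => B j (p i)).det = 0 := by
      apply Matrix.det_zero_of_row_eq hne
      funext j'
      simp [hij]
    rw [hT]; dsimp only; rw [this, mul_zero]
  have step4 : ∑ p ∈ Finset.univ.filter (fun p : Fin s → Fin m => Function.Injective p), T p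
      = ∑ V ∈ Finset.univ.powersetCard s,
          ∑ p ∈ (Finset.univ.filter (fun p : Fin s → Fin m => Function.Injective p)).filter
              (fun p => Finset.image p Finset.univ = V), T p := by
    symm
    apply Finset.sum_fiberwise_of_maps_to
    intro p hp
    rw [Finset.mem_filter] at hp
    rw [Finset.mem_powersetCard_univ, Finset.card_image_of_injective _ hp.2, card_univ,
      Fintype.card_fin]
  rw [step1, step2, step3, step4]
  refine Finset.sum_congr rfl fun V hV' => ?_
  have hV : V.card = s := Finset.mem_powersetCard_univ.mp hV'
  rw [dif_pos hV]
  -- inner bijection with permutations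
  have inner : ∑ p ∈ (Finset.univ.filter (fun p : Fin s → Fin m => Function.Injective p)).filter
      (fun p => Finset.image p Finset.univ = V), T p
      = ∑ σ : Equiv.Perm (Fin s), T (fun x => V.orderEmbOfFin hV (σ x)) := by
    refine Finset.sum_bij' (i := fun p hp => permOf V hV p ?_ ?_)
      (j := fun σ _ => fun x => V.orderEmbOfFin hV (σ x)) ?_ ?_ ?_ ?_ ?_
    · exact (Finset.mem_filter.mp (Finset.mem_filter.mp hp).1).2
    · intro x
      have him : Finset.image p Finset.univ = V := (Finset.mem_filter.mp hp).2
      rw [← him]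
      exact Finset.mem_image_of_mem p (Finset.mem_univ x)
    · intro p hp
      exact Finset.mem_univ _
    · intro σ _
      rw [Finset.mem_filter, Finset.mem_filter]
      exact ⟨⟨Finset.mem_univ _, (V.orderEmbOfFin hV).injective.comp σ.injective⟩,
        image_orderEmbOfFin_comp V hV σ⟩
    · intro p hp
      funext x
      exact permOf_spec V hV p _ _ x
    · intro σ _
      apply Equiv.ext
      intro x
      apply (V.orderEmbOfFin hV).injective
      rw [permOf_spec]
    · intro p hp
      congr 1
      funext x
      rw [permOf_spec]
  rw [inner]
  -- now compute the sum over permutations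
  have hprodw : ∀ σ : Equiv.Perm (Fin s),
      (∏ i, w (V.orderEmbOfFin hV (σ i))) = ∏ k ∈ V, w k := by
    intro σ
    have himg := image_orderEmbOfFin_comp V hV (Equiv.refl _)
    calc ∏ i, w (V.orderEmbOfFin hV (σ i)) = ∏ i, w (V.orderEmbOfFin hV i) :=
          Equiv.prod_comp σ (fun i => w (V.orderEmbOfFin hV i))
      _ = ∏ k ∈ Finset.image (fun x => V.orderEmbOfFin hV ((Equiv.refl (Fin s)) x))
            Finset.univ, w k := by
          rw [Finset.prod_image (fun a _ b _ hab =>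
            (Equiv.refl (Fin s)).injective ((V.orderEmbOfFin hV).injective hab))]
          rfl
      _ = ∏ k ∈ V, w k := by rw [himg]
  set M0 : Matrix (Fin s) (Fin s) R := Matrix.of fun i j => B j (V.orderEmbOfFin hV i) with hM0
  have hdetM0 : M0.det = (B.submatrix id (V.orderEmbOfFin hV)).det := by
    rw [← Matrix.det_transpose M0]
    congr 1
  have hleib : M0.det = ∑ σ : Equiv.Perm (Fin s),
      (Equiv.Perm.sign σ : R) * ∏ i, B i (V.orderEmbOfFin hV (σ i)) := by
    rw [Matrix.det_apply]
    refine Finset.sum_congr rfl fun σ _ => ?_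
    rw [Units.smul_def, zsmul_eq_mul]
    rfl
  calc ∑ σ : Equiv.Perm (Fin s), T (fun x => V.orderEmbOfFin hV (σ x))
      = ∑ σ : Equiv.Perm (Fin s), (∏ k ∈ V, w k) * (M0.det *
          ((Equiv.Perm.sign σ : R) * ∏ i, B i (V.orderEmbOfFin hV (σ i)))) := by
        refine Finset.sum_congr rfl fun σ _ => ?_
        rw [hT]
        dsimp only
        have h1 : (Matrix.of fun i j => B j (V.orderEmbOfFin hV (σ i))).det
            = (Equiv.Perm.sign σ : R) * M0.det := by
          have : (Matrix.of fun i j => B j (V.orderEmbOfFin hV (σ i)))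
              = M0.submatrix σ id := by
            ext i j
            simp [hM0]
          rw [this, Matrix.det_permute]
        rw [h1, hc]
        dsimp only
        rw [Finset.prod_mul_distrib, hprodw σ]
        ring
    _ = (∏ k ∈ V, w k) * (B.submatrix id (V.orderEmbOfFin hV)).det ^ 2 := by
        rw [← Finset.mul_sum, ← Finset.mul_sum, ← hleib, hdetM0, sq]

lemma prod_comp_orderEmbOfFin {s m : ℕ} (V : Finset (Fin m)) (hV : V.card = s)
    (w : Fin m → R) : ∏ i, w (V.orderEmbOfFin hV i) = ∏ k ∈ V, w k := by
  have himg := image_orderEmbOfFin_comp V hV (Equiv.refl _)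
  calc ∏ i, w (V.orderEmbOfFin hV i)
      = ∏ k ∈ Finset.image (fun x => V.orderEmbOfFin hV ((Equiv.refl (Fin s)) x))
          Finset.univ, w k := by
        rw [Finset.prod_image (fun a _ b _ hab =>
          (Equiv.refl (Fin s)).injective ((V.orderEmbOfFin hV).injective hab))]
        rfl
    _ = ∏ k ∈ V, w k := by rw [himg]

lemma prod_ite_pow {m : ℕ} (V C : Finset (Fin m)) (x : R) :
    (∏ k ∈ V, if k ∈ C then x else 1) = x ^ (V ∩ C).card := by
  rw [← Finset.prod_filter, Finset.prod_const, Finset.filter_mem_eq_inter]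

lemma mono3 (a b c : ℕ) (d : ℝ) :
    (MvPolynomial.X (0 : Fin 3) : MvPolynomial (Fin 3) ℝ) ^ a * MvPolynomial.X 1 ^ b *
        MvPolynomial.X 2 ^ c * MvPolynomial.C d
      = MvPolynomial.monomial
          (Finsupp.single 0 a + Finsupp.single 1 b + Finsupp.single 2 c) d := by
  rw [MvPolynomial.X_pow_eq_monomial, MvPolynomial.X_pow_eq_monomial,
    MvPolynomial.X_pow_eq_monomial, MvPolynomial.C_apply, MvPolynomial.monomial_mul,
    MvPolynomial.monomial_mul, MvPolynomial.monomial_mul]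
  simp

lemma triple_eq_iff (a b c a' b' c' : ℕ) :
    (Finsupp.single (0 : Fin 3) a + Finsupp.single 1 b + Finsupp.single 2 c
        = Finsupp.single 0 a' + Finsupp.single 1 b' + Finsupp.single 2 c')
      ↔ a = a' ∧ b = b' ∧ c = c' := by
  constructor
  · intro h
    have h0 := DFunLike.congr_fun h 0
    have h1 := DFunLike.congr_fun h 1
    have h2 := DFunLike.congr_fun h 2
    refine ⟨?_, ?_, ?_⟩
    · simpa [Finsupp.single_apply] using h0
    · simpa [Finsupp.single_apply] using h1
    · simpa [Finsupp.single_apply] using h2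
  · rintro ⟨rfl, rfl, rfl⟩
    rfl

end Aux

/-- The minor of `M` with rows `U` and columns `V` (in increasing order), defined to be `0`
if `U` and `V` have different cardinalities. -/
noncomputable def minorDet {m : ℕ} {R : Type} [CommRing R]
    (M : Matrix (Fin m) (Fin m) R) (U V : Finset (Fin m)) : R :=
  if h : V.card = U.card then
    (M.submatrix (U.orderEmbOfFin rfl) (V.orderEmbOfFin h)).det
  else 0

lemma minorDet_eq {m s : ℕ} {R : Type} [CommRing R] (A : Matrix (Fin m) (Fin m) R)
    {U V : Finset (Fin m)} (hU : U.card = s) (hV : V.card = s) :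
    minorDet A U V = (A.submatrix (U.orderEmbOfFin hU) (V.orderEmbOfFin hV)).det := by
  subst hU
  rw [minorDet, dif_pos hV]

/-- The coefficient of `λ^{m-k'} t_r^p t_c^q` in the trivariate polynomial
`P(λ, t_r, t_c) = det(Âᵀ((I−D_r) + t_r D_r) Â ((I−D_c) + t_c D_c) + λI)` equals the sum of
`det(Â_{U',V'})²` over pairs `(U',V')` with `|U'| = |V'| = k'`, `|U' ∩ R| = p` and
`|V' ∩ C| = q`.  Here `λ, t_r, t_c` are the variables `X 0, X 1, X 2` of a trivariate
polynomial ring, and `D_r`, `D_c` are the 0/1 diagonal matrices indicating `R` and `C`. -/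
theorem stmt_17 (m k' p q : ℕ) (hk' : k' ≤ m) (A : Matrix (Fin m) (Fin m) ℝ)
    (Rset Cset : Finset (Fin m)) :
    MvPolynomial.coeff
        (Finsupp.single 0 (m - k') + Finsupp.single 1 p + Finsupp.single 2 q)
        (Matrix.det
          ((A.map (MvPolynomial.C : ℝ →+* MvPolynomial (Fin 3) ℝ))ᵀ *
              ((1 - (Matrix.diagonal fun i => if i ∈ Rset then (1 : ℝ) else 0).map
                    MvPolynomial.C) +
                (MvPolynomial.X (1 : Fin 3) : MvPolynomial (Fin 3) ℝ) •
                  (Matrix.diagonal fun i => if i ∈ Rset then (1 : ℝ) else 0).map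
                    MvPolynomial.C) *
              (A.map MvPolynomial.C) *
              ((1 - (Matrix.diagonal fun i => if i ∈ Cset then (1 : ℝ) else 0).map
                    MvPolynomial.C) +
                (MvPolynomial.X (2 : Fin 3) : MvPolynomial (Fin 3) ℝ) •
                  (Matrix.diagonal fun i => if i ∈ Cset then (1 : ℝ) else 0).map
                    MvPolynomial.C) +
            (MvPolynomial.X (0 : Fin 3) : MvPolynomial (Fin 3) ℝ) • (1 : Matrix (Fin m) (Fin m) (MvPolynomial (Fin 3) ℝ)))) =
      ∑ U' ∈ (Finset.univ.powersetCard k').filter fun U' => (U' ∩ Rset).card = p,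
        ∑ V' ∈ (Finset.univ.powersetCard k').filter fun V' => (V' ∩ Cset).card = q,
          (minorDet A U' V') ^ 2 := by
  classical
  set md : Fin m → MvPolynomial (Fin 3) ℝ := fun i => if i ∈ Rset then X 1 else 1 with hmd
  set nd : Fin m → MvPolynomial (Fin 3) ℝ := fun i => if i ∈ Cset then X 2 else 1 with hnd
  set A' : Matrix (Fin m) (Fin m) (MvPolynomial (Fin 3) ℝ) :=
    A.map (MvPolynomial.C : ℝ →+* MvPolynomial (Fin 3) ℝ) with hA'
  have hM : (1 - (Matrix.diagonal fun i => if i ∈ Rset then (1 : ℝ) else 0).map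
        (MvPolynomial.C : ℝ →+* MvPolynomial (Fin 3) ℝ))
      + (MvPolynomial.X (1 : Fin 3) : MvPolynomial (Fin 3) ℝ) •
          (Matrix.diagonal fun i => if i ∈ Rset then (1 : ℝ) else 0).map MvPolynomial.C
      = Matrix.diagonal md := by
    ext i j
    by_cases hij : i = j
    · subst hij
      by_cases hi : i ∈ Rset <;>
        simp [hmd, hi, Matrix.add_apply, Matrix.sub_apply, Matrix.smul_apply, Matrix.one_apply,
          Matrix.diagonal_apply, Matrix.map_apply, smul_eq_mul]
    · simp [hmd, hij, Matrix.add_apply, Matrix.sub_apply, Matrix.smul_apply, Matrix.one_apply,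
        Matrix.diagonal_apply, Matrix.map_apply, smul_eq_mul]
  have hN : (1 - (Matrix.diagonal fun i => if i ∈ Cset then (1 : ℝ) else 0).map
        (MvPolynomial.C : ℝ →+* MvPolynomial (Fin 3) ℝ))
      + (MvPolynomial.X (2 : Fin 3) : MvPolynomial (Fin 3) ℝ) •
          (Matrix.diagonal fun i => if i ∈ Cset then (1 : ℝ) else 0).map MvPolynomial.C
      = Matrix.diagonal nd := by
    ext i j
    by_cases hij : i = j
    · subst hij
      by_cases hi : i ∈ Cset <;>
        simp [hnd, hi, Matrix.add_apply, Matrix.sub_apply, Matrix.smul_apply, Matrix.one_apply,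
          Matrix.diagonal_apply, Matrix.map_apply, smul_eq_mul]
    · simp [hnd, hij, Matrix.add_apply, Matrix.sub_apply, Matrix.smul_apply, Matrix.one_apply,
        Matrix.diagonal_apply, Matrix.map_apply, smul_eq_mul]
  rw [hM, hN, det_add_smul_one (A'ᵀ * Matrix.diagonal md * A' * Matrix.diagonal nd)
    (MvPolynomial.X (0 : Fin 3)), MvPolynomial.coeff_sum]
  have key : ∀ S : Finset (Fin m),
      (MvPolynomial.X (0 : Fin 3) : MvPolynomial (Fin 3) ℝ) ^ (m - S.card) *
        ((A'ᵀ * Matrix.diagonal md * A' * Matrix.diagonal nd).submatrix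
          (S.orderEmbOfFin rfl) (S.orderEmbOfFin rfl)).det
      = ∑ V ∈ Finset.univ.powersetCard S.card,
          MvPolynomial.monomial
            (Finsupp.single 0 (m - S.card) + Finsupp.single 1 ((V ∩ Rset).card)
              + Finsupp.single 2 ((S ∩ Cset).card)) ((minorDet A V S) ^ 2) := by
    intro S
    set Bm : Matrix (Fin S.card) (Fin m) (MvPolynomial (Fin 3) ℝ) :=
      Matrix.of fun i k => A' k (S.orderEmbOfFin rfl i) with hBm
    have hsub1 : (A'ᵀ * Matrix.diagonal md * A' * Matrix.diagonal nd).submatrix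
        (S.orderEmbOfFin rfl) (S.orderEmbOfFin rfl)
        = ((A'ᵀ * Matrix.diagonal md * A').submatrix (S.orderEmbOfFin rfl) (S.orderEmbOfFin rfl))
            * Matrix.diagonal (fun j => nd (S.orderEmbOfFin rfl j)) := by
      ext i j
      simp [Matrix.submatrix_apply, Matrix.mul_diagonal]
    have hsub2 : (A'ᵀ * Matrix.diagonal md * A').submatrix
        (S.orderEmbOfFin rfl) (S.orderEmbOfFin rfl)
        = Matrix.of (fun i j => ∑ k, md k * (Bm i k * Bm j k)) := by
      funext i j
      show (A'ᵀ * Matrix.diagonal md * A') (S.orderEmbOfFin rfl i) (S.orderEmbOfFin rfl j)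
        = ∑ k, md k * (Bm i k * Bm j k)
      rw [Matrix.mul_apply]
      refine Finset.sum_congr rfl fun k _ => ?_
      rw [Matrix.mul_diagonal]
      simp only [Matrix.transpose_apply, hBm, Matrix.of_apply]
      ring
    rw [hsub1, Matrix.det_mul, Matrix.det_diagonal, hsub2, det_BDBt,
      prod_comp_orderEmbOfFin S rfl nd]
    simp only [hnd]
    rw [prod_ite_pow S Cset, Finset.sum_mul, Finset.mul_sum]
    refine Finset.sum_congr rfl fun V hVm => ?_
    have hV : V.card = S.card := Finset.mem_powersetCard_univ.mp hVm
    rw [dif_pos hV]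
    have hdet : (Bm.submatrix id (V.orderEmbOfFin hV)).det
        = MvPolynomial.C (minorDet A V S) := by
      have heq : Bm.submatrix id (V.orderEmbOfFin hV)
          = ((A.submatrix (V.orderEmbOfFin hV) (S.orderEmbOfFin rfl)).map
              (MvPolynomial.C : ℝ →+* MvPolynomial (Fin 3) ℝ))ᵀ := by
        ext i j
        simp [hBm, hA', Matrix.submatrix_apply, Matrix.map_apply, Matrix.transpose_apply]
      rw [heq, Matrix.det_transpose, ← RingHom.mapMatrix_apply, ← RingHom.map_det, minorDet_eq A hV rfl]
    rw [hdet]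
    simp only [hmd]
    rw [prod_ite_pow V Rset, ← map_pow, ← mono3]
    ring
  calc ∑ S : Finset (Fin m), MvPolynomial.coeff
        (Finsupp.single 0 (m - k') + Finsupp.single 1 p + Finsupp.single 2 q)
        ((MvPolynomial.X (0 : Fin 3) : MvPolynomial (Fin 3) ℝ) ^ (m - S.card) *
          ((A'ᵀ * Matrix.diagonal md * A' * Matrix.diagonal nd).submatrix
            (S.orderEmbOfFin rfl) (S.orderEmbOfFin rfl)).det)
      = ∑ S : Finset (Fin m), ∑ V ∈ Finset.univ.powersetCard S.card,
          (if m - S.card = m - k' ∧ (V ∩ Rset).card = p ∧ (S ∩ Cset).card = q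
            then (minorDet A V S) ^ 2 else 0) := by
        refine Finset.sum_congr rfl fun S _ => ?_
        rw [key S, MvPolynomial.coeff_sum]
        refine Finset.sum_congr rfl fun V _ => ?_
        rw [MvPolynomial.coeff_monomial]
        simp only [triple_eq_iff]
    _ = ∑ U' ∈ (Finset.univ.powersetCard k').filter fun U' => (U' ∩ Rset).card = p,
        ∑ V' ∈ (Finset.univ.powersetCard k').filter fun V' => (V' ∩ Cset).card = q,
          (minorDet A U' V') ^ 2 := by
        rw [Finset.sum_comm]
        have hseteq : ((Finset.univ.powersetCard k').filter
              fun V' => (V' ∩ Cset).card = q)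
            = Finset.univ.filter (fun S : Finset (Fin m) =>
                S.card = k' ∧ (S ∩ Cset).card = q) := by
          ext S
          simp [Finset.mem_filter, Finset.mem_powersetCard_univ]
        rw [hseteq]
        rw [← Finset.sum_subset (Finset.subset_univ (Finset.univ.filter
            (fun S : Finset (Fin m) => S.card = k' ∧ (S ∩ Cset).card = q)))]
        · refine Finset.sum_congr rfl fun S hS => ?_
          rw [Finset.mem_filter] at hS
          have hSk := hS.2.1
          have hSq := hS.2.2
          rw [hSk, Finset.sum_filter]
          refine Finset.sum_congr rfl fun V _ => ?_
          simp [hSq]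
        · intro S _ hSnot
          rw [Finset.mem_filter] at hSnot
          push_neg at hSnot
          apply Finset.sum_eq_zero
          intro V _
          have hneg : ¬(m - S.card = m - k' ∧ (V ∩ Rset).card = p
              ∧ (S ∩ Cset).card = q) := by
            rintro ⟨h1, h2, h3⟩
            have hSm : S.card ≤ m := by
              have h4 := Finset.card_le_univ S
              simpa using h4
            have hk : S.card = k' := by omega
            exact (hSnot (Finset.mem_univ S) hk) h3
          rw [if_neg hneg]
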